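/- arXiv:2108.09001 — 3 statements merged into one kernel-verified Lean document; each statement's English description precedes it below -/
import Mathlib

section
/- Let positive reals D_L, D_2, D_3, D_4, D_6, D_6', D_8, D_{12}, D_{12}', D_{12}'' satisfy: D_L D_2^2 = D_{12}' D_8^2, D_{12}'' = D_6' D_4^2, D_L D_6'^2 = D_{12} D_{12}' D_{12}'', and D_{12} D_3^2 = D_6^2 D_6'. Then D_6/D_3 = D_8/(D_4 D_2) = D_{12} D_4 D_2 / (D_8 D_6'). -/
/-!
All three ratios are square roots of `D12 / D6'`. Relation `h4` says `(D6 / D3) ^ 2 = D12 / D6'`.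
Eliminating `D12'` and `D12''` from `h1`–`h3` and cancelling `DL * D6'` gives
`D8 ^ 2 * D6' = D12 * (D4 * D2) ^ 2`, i.e. `(D8 / (D4 * D2)) ^ 2 = D12 / D6'`; the third ratio is
`(D12 / D6') / (D8 / (D4 * D2))`. Positivity then identifies the square roots.
-/

theorem div_sq_eq_div_of_mul_sq_eq {K : Type*} [Field K] {a b c d : K} (hb : b ≠ 0) (hd : d ≠ 0)
    (h : c * b ^ 2 = a ^ 2 * d) : (a / b) ^ 2 = c / d := by
  rw [div_pow, div_eq_div_iff (pow_ne_zero 2 hb) hd]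
  linear_combination -h

theorem conductor_A4xC2_general (DL D2 D3 D4 D6 D6' D8 D12 D12' D12'' : ℝ)
    (hDL : 0 < DL) (hD2 : 0 < D2) (hD3 : 0 < D3) (hD4 : 0 < D4)
    (hD6 : 0 < D6) (hD6' : 0 < D6') (hD8 : 0 < D8)
    (h1 : DL * D2 ^ 2 = D12' * D8 ^ 2)
    (h2 : D12'' = D6' * D4 ^ 2)
    (h3 : DL * D6' ^ 2 = D12 * D12' * D12'')
    (h4 : D12 * D3 ^ 2 = D6 ^ 2 * D6') :
    D6 / D3 = D8 / (D4 * D2) ∧ D8 / (D4 * D2) = D12 * D4 * D2 / (D8 * D6') := by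
  have key : D12 * (D4 * D2) ^ 2 = D8 ^ 2 * D6' := by
    refine mul_left_cancel₀ (mul_pos hDL hD6').ne' ?_
    linear_combination D12 * D12'' * h1 - D12 * DL * D2 ^ 2 * h2 - D8 ^ 2 * h3
  have hD6D3 : (D6 / D3) ^ 2 = D12 / D6' := div_sq_eq_div_of_mul_sq_eq hD3.ne' hD6'.ne' h4
  have hD8D4D2 : (D8 / (D4 * D2)) ^ 2 = D12 / D6' :=
    div_sq_eq_div_of_mul_sq_eq (by positivity) hD6'.ne' key
  refine ⟨(sq_eq_sq₀ (by positivity) (by positivity)).mp (hD6D3.trans hD8D4D2.symm), ?_⟩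
  rw [div_eq_div_iff (by positivity) (by positivity)]
  linear_combination -key

/-- Lemma 3.2: the candidate conductors for tori with splitting group `A₄ × C₂` agree. -/
theorem conductor_A4xC2 (DL D2 D3 D4 D6 D6' D8 D12 D12' D12'' : ℝ)
    (hDL : 0 < DL) (hD2 : 0 < D2) (hD3 : 0 < D3) (hD4 : 0 < D4)
    (hD6 : 0 < D6) (hD6' : 0 < D6') (hD8 : 0 < D8)
    (hD12 : 0 < D12) (hD12' : 0 < D12') (hD12'' : 0 < D12'')
    (h1 : DL * D2 ^ 2 = D12' * D8 ^ 2)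
    (h2 : D12'' = D6' * D4 ^ 2)
    (h3 : DL * D6' ^ 2 = D12 * D12' * D12'')
    (h4 : D12 * D3 ^ 2 = D6 ^ 2 * D6') :
    D6 / D3 = D8 / (D4 * D2) ∧ D8 / (D4 * D2) = D12 * D4 * D2 / (D8 * D6') :=
  conductor_A4xC2_general DL D2 D3 D4 D6 D6' D8 D12 D12' D12'' hDL hD2 hD3 hD4 hD6 hD6' hD8 h1 h2 h3
    h4
end

section
/- Let positive reals D_3, D_4, D_6'', D_6''', D_6'''', D_{12}'' and also D_2, D_8, D_6, D_{12} satisfy: D_6'''' = D_3 D_4, D_{12}'' D_3^2 = D_6'' D_6''' D_6'''', D_{12}'' D_2 = D_8 D_6''', and D_{12}/D_6 = D_{12}''/D_6'''. Then D_6''/D_3 = D_8/(D_4 D_2) = D_{12}/(D_6 D_4). -/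
theorem conductor_S4_lem3d_general (D3 D4 D6'' D6''' D6'''' D12'' D2 D8 D6 D12 : ℝ)
    (hD3 : 0 < D3) (hD4 : 0 < D4) (hD6''' : 0 < D6''') (hD2 : 0 < D2)
    (h1 : D6'''' = D3 * D4)
    (h2 : D12'' * D3 ^ 2 = D6'' * D6''' * D6'''')
    (h3 : D12'' * D2 = D8 * D6''')
    (h4 : D12 / D6 = D12'' / D6''') :
    D6'' / D3 = D8 / (D4 * D2) ∧ D8 / (D4 * D2) = D12 / (D6 * D4) := by
  have hD64 : D6''' * D4 ≠ 0 := by positivity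
  have h6'' : D6'' / D3 = D12'' / (D6''' * D4) := by
    rw [div_eq_div_iff hD3.ne' hD64]
    refine mul_left_cancel₀ hD3.ne' ?_
    linear_combination -h2 - D6'' * D6''' * h1
  have h8 : D8 / (D4 * D2) = D12'' / (D6''' * D4) := by
    rw [div_eq_div_iff (by positivity) hD64]
    linear_combination -D4 * h3
  have h12 : D12 / (D6 * D4) = D12'' / (D6''' * D4) := by
    rw [← div_div, h4, div_div]
  exact ⟨h6''.trans h8.symm, h8.trans h12.symm⟩

/-- Lemma 3.4: equality of three conductor expressions for tori with splitting group `S₄`. -/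
theorem conductor_S4_lem3d (D3 D4 D6'' D6''' D6'''' D12'' D2 D8 D6 D12 : ℝ)
    (hD3 : 0 < D3) (hD4 : 0 < D4) (hD6'' : 0 < D6'') (hD6''' : 0 < D6''')
    (hD6'''' : 0 < D6'''') (hD12'' : 0 < D12'') (hD2 : 0 < D2)
    (hD8 : 0 < D8) (hD6 : 0 < D6) (hD12 : 0 < D12)
    (h1 : D6'''' = D3 * D4)
    (h2 : D12'' * D3 ^ 2 = D6'' * D6''' * D6'''')
    (h3 : D12'' * D2 = D8 * D6''')
    (h4 : D12 / D6 = D12'' / D6''') :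
    D6'' / D3 = D8 / (D4 * D2) ∧ D8 / (D4 * D2) = D12 / (D6 * D4) :=
  conductor_S4_lem3d_general D3 D4 D6'' D6''' D6'''' D12'' D2 D8 D6 D12 hD3 hD4 hD6''' hD2 h1 h2 h3
    h4
end

section
/- Let positive reals D_L, D_2, D_2', D_2'', D_4, D_4'', D_6', D_8, D_8', D_8''', D_{12}, D_{12}'', D_{16}, D_{24}, D_{24}', D_{24}'' satisfy: D_L D_4''^2 = D_{24}'' D_{16}^2, D_{24} D_2''^2 = D_{12}'' D_8'''^2, D_L D_{12}''^2 = D_{24} D_{24}' D_{24}'', D_{24}' D_6'^2 = D_{12}^2 D_{12}'', D_{16} D_4^2 = D_8 D_8' D_8''', and D_4'' = D_2 D_2' D_2''. Then (D_8/(D_4 D_2))^2 = (D_{12} D_4 D_2' / (D_8' D_6'))^2, hence D_8/(D_4 D_2) = D_{12} D_4 D_2' / (D_8' D_6'). -/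
/-!
The relations for the discriminants of degree `L`, 24, 12 and 6 combine (as `h1 - h3 + h2 + h4`
after taking logarithms) to `(D16 D2'' D6')² = (D8''' D12 D4'')²`. Substituting
`D4'' = D2 D2' D2''` and `D16 D4² = D8 D8' D8'''` turns this into
`(D8 D8' D6')² = (D12 D4² D2 D2')²`, the squared identity with denominators cleared; both sides
of the unsquared identity are positive, so it follows.
-/

namespace ConductorS4xC2

variable {K : Type*} [CommRing K] [IsDomain K]

theorem sq_D16_mul_eq {DL D2'' D4'' D6' D8''' D12 D12'' D16 D24 D24' D24'' : K}
    (hD12'' : D12'' ≠ 0) (hD24'' : D24'' ≠ 0)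
    (h1 : DL * D4'' ^ 2 = D24'' * D16 ^ 2)
    (h2 : D24 * D2'' ^ 2 = D12'' * D8''' ^ 2)
    (h3 : DL * D12'' ^ 2 = D24 * D24' * D24'')
    (h4 : D24' * D6' ^ 2 = D12 ^ 2 * D12'') :
    (D16 * D2'' * D6') ^ 2 = (D8''' * D12 * D4'') ^ 2 := by
  have h13 : D24 * D24' * D4'' ^ 2 = (D16 * D12'') ^ 2 :=
    mul_left_cancel₀ hD24'' (by linear_combination D12'' ^ 2 * h1 - D4'' ^ 2 * h3)
  refine mul_left_cancel₀ (pow_ne_zero 2 hD12'') ?_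
  linear_combination -(D2'' ^ 2 * D6' ^ 2) * h13 + D4'' ^ 2 * D24' * D6' ^ 2 * h2
    + D4'' ^ 2 * D12'' * D8''' ^ 2 * h4

theorem sq_D8_mul_eq {D2 D2' D2'' D4 D4'' D6' D8 D8' D8''' D12 D16 : K}
    (hD2'' : D2'' ≠ 0) (hD8''' : D8''' ≠ 0)
    (h : (D16 * D2'' * D6') ^ 2 = (D8''' * D12 * D4'') ^ 2)
    (h5 : D16 * D4 ^ 2 = D8 * D8' * D8''')
    (h6 : D4'' = D2 * D2' * D2'') :
    (D8 * D8' * D6') ^ 2 = (D12 * D4 ^ 2 * D2 * D2') ^ 2 := by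
  subst h6
  have h16 : (D16 * D6') ^ 2 = (D8''' * D12 * D2 * D2') ^ 2 :=
    mul_left_cancel₀ (pow_ne_zero 2 hD2'') (by linear_combination h)
  refine mul_left_cancel₀ (pow_ne_zero 2 hD8''') ?_
  linear_combination D4 ^ 4 * h16 - (D16 * D4 ^ 2 + D8 * D8' * D8''') * D6' ^ 2 * h5

end ConductorS4xC2

theorem conductor_S4xC2_part2_general
    (DL D2 D2' D2'' D4 D4'' D6' D8 D8' D8''' D12 D12'' D16 D24 D24' D24'' : ℝ)
    (hD2 : 0 < D2) (hD2' : 0 < D2') (hD2'' : 0 < D2'')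
    (hD4 : 0 < D4) (hD6' : 0 < D6') (hD8 : 0 < D8)
    (hD8' : 0 < D8') (hD8''' : 0 < D8''') (hD12 : 0 < D12) (hD12'' : 0 < D12'')
    (hD24'' : 0 < D24'')
    (h1 : DL * D4'' ^ 2 = D24'' * D16 ^ 2)
    (h2 : D24 * D2'' ^ 2 = D12'' * D8''' ^ 2)
    (h3 : DL * D12'' ^ 2 = D24 * D24' * D24'')
    (h4 : D24' * D6' ^ 2 = D12 ^ 2 * D12'')
    (h5 : D16 * D4 ^ 2 = D8 * D8' * D8''')
    (h6 : D4'' = D2 * D2' * D2'') :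
    (D8 / (D4 * D2)) ^ 2 = (D12 * D4 * D2' / (D8' * D6')) ^ 2 ∧
      D8 / (D4 * D2) = D12 * D4 * D2' / (D8' * D6') := by
  have hcleared : (D8 * D8' * D6') ^ 2 = (D12 * D4 ^ 2 * D2 * D2') ^ 2 :=
    ConductorS4xC2.sq_D8_mul_eq hD2''.ne' hD8'''.ne'
      (ConductorS4xC2.sq_D16_mul_eq hD12''.ne' hD24''.ne' h1 h2 h3 h4) h5 h6
  have hsq : (D8 / (D4 * D2)) ^ 2 = (D12 * D4 * D2' / (D8' * D6')) ^ 2 := by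
    rw [div_pow, div_pow, div_eq_div_iff (by positivity) (by positivity)]
    linear_combination hcleared
  exact ⟨hsq, (sq_eq_sq₀ (by positivity) (by positivity)).mp hsq⟩

/-- Second part of Lemma 3.5: conductor expressions for tori with splitting group `S₄ × C₂`. -/
theorem conductor_S4xC2_part2
    (DL D2 D2' D2'' D4 D4'' D6' D8 D8' D8''' D12 D12'' D16 D24 D24' D24'' : ℝ)
    (hDL : 0 < DL) (hD2 : 0 < D2) (hD2' : 0 < D2') (hD2'' : 0 < D2'')
    (hD4 : 0 < D4) (hD4'' : 0 < D4'') (hD6' : 0 < D6') (hD8 : 0 < D8)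
    (hD8' : 0 < D8') (hD8''' : 0 < D8''') (hD12 : 0 < D12) (hD12'' : 0 < D12'')
    (hD16 : 0 < D16) (hD24 : 0 < D24) (hD24' : 0 < D24') (hD24'' : 0 < D24'')
    (h1 : DL * D4'' ^ 2 = D24'' * D16 ^ 2)
    (h2 : D24 * D2'' ^ 2 = D12'' * D8''' ^ 2)
    (h3 : DL * D12'' ^ 2 = D24 * D24' * D24'')
    (h4 : D24' * D6' ^ 2 = D12 ^ 2 * D12'')
    (h5 : D16 * D4 ^ 2 = D8 * D8' * D8''')
    (h6 : D4'' = D2 * D2' * D2'') :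
    (D8 / (D4 * D2)) ^ 2 = (D12 * D4 * D2' / (D8' * D6')) ^ 2 ∧
      D8 / (D4 * D2) = D12 * D4 * D2' / (D8' * D6') :=
  conductor_S4xC2_part2_general DL D2 D2' D2'' D4 D4'' D6' D8 D8' D8''' D12 D12'' D16 D24 D24' D24''
    hD2 hD2' hD2'' hD4 hD6' hD8 hD8' hD8''' hD12 hD12'' hD24'' h1 h2 h3 h4 h5 h6
end
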